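/- Let X be a countable set, n ≥ 1 an integer, and D_1, …, D_n probability distributions on X. Let Q be a probability distribution on X^n that is a multi-dimensional coupling of D_1,…,D_n: for every i ∈ [n] and x ∈ X, Q({w ∈ X^n : w_i = x}) = D_i(x). Let S ⊆ X be a coincident subset for Q: for every x ∈ S and every i ∈ [n], Q({w : w_i = x}) = Q({w : ∃ j ∈ [n], w_j = x}). Let γ = Q({w : ∃ i ∈ [n], w_i ∉ S}). Then for every randomized guessing rule, i.e. every function g : X → Δ([n]) assigning to each observation a probability vector over [n], the success probability of guessing a uniformly random index from one observation satisfies (1/n)·Σ_{i=1}^n Σ_{x∈X} D_i(x)·g(x)_i ≤ γ + (1−γ)/n. (Lemma 3.7, multi-dimensional coupling indistinguishability.) -/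

import Mathlib

/-! Coincidence at `x ∈ S` forces all the `Q`-mass of vectors containing `x` onto the constant
vector `(x, …, x)`. Hence every `D i` agrees on `S` with `x ↦ Q (x, …, x)`, a common
sub-distribution of total mass `1 - γ`: on `S` the observation carries no information about the
index, so summing the success over all indices gives at most `1 - γ` there, while off `S` each
`D i` has mass `γ`, which contributes at most `n γ`. -/

open Finset

lemma eq_zero_of_tsum_subtype_eq_of_subset {α : Type*} {f : α → ℝ} (hf0 : ∀ a, 0 ≤ f a)
    (hf : Summable f) {s t : Set α} (hst : s ⊆ t) (h : ∑' a : s, f a = ∑' a : t, f a)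
    {a : α} (ha : a ∈ t \ s) : f a = 0 := by
  have hsplit : ∑' b : ↑(s ∪ t \ s), f b = ∑' b : s, f b + ∑' b : ↑(t \ s), f b :=
    (hf.subtype _).tsum_union_disjoint Set.disjoint_sdiff_right (hf.subtype _)
  rw [Set.union_sdiff_cancel hst, ← h, left_eq_add] at hsplit
  have hle : f a ≤ ∑' b : ↑(t \ s), f b :=
    (hf.subtype (· ∈ t \ s)).le_tsum ⟨a, ha⟩ fun b _ ↦ hf0 b
  exact le_antisymm (hsplit ▸ hle) (hf0 a)

section Coupling

variable {ι X : Type*} {Q : (ι → X) → ℝ}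

lemma eq_zero_of_coincident (hQ0 : ∀ v, 0 ≤ Q v) (hQs : Summable Q) {x : X} {i : ι}
    (hx : ∑' v : {v : ι → X | v i = x}, Q v = ∑' v : {v : ι → X | ∃ j, v j = x}, Q v)
    {v : ι → X} (hv : ∃ j, v j = x) (hvi : v i ≠ x) : Q v = 0 :=
  eq_zero_of_tsum_subtype_eq_of_subset hQ0 hQs (t := {v | ∃ j, v j = x}) (fun _ hw ↦ ⟨i, hw⟩) hx
    ⟨hv, hvi⟩

lemma tsum_fiber_eq_const (hQ0 : ∀ v, 0 ≤ Q v) (hQs : Summable Q) {x : X}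
    (hx : ∀ i, ∑' v : {v : ι → X | v i = x}, Q v = ∑' v : {v : ι → X | ∃ j, v j = x}, Q v)
    (i : ι) : ∑' v : {v : ι → X | v i = x}, Q v = Q (Function.const ι x) := by
  refine tsum_eq_single (⟨Function.const ι x, rfl⟩ : {v : ι → X | v i = x})
    fun ⟨v, hv⟩ hne ↦ ?_
  obtain ⟨j, hj⟩ : ∃ j, v j ≠ x := by
    by_contra! h
    exact hne (Subtype.ext (funext h))
  exact eq_zero_of_coincident hQ0 hQs (hx j) ⟨i, hv⟩ hj

lemma tsum_const_eq_one_sub [Nonempty ι] (hQ0 : ∀ v, 0 ≤ Q v) (hQs : Summable Q)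
    (hQ1 : ∑' v, Q v = 1) {S : Set X} (hS : ∀ x ∈ S, ∀ i,
      ∑' v : {v : ι → X | v i = x}, Q v = ∑' v : {v : ι → X | ∃ j, v j = x}, Q v) :
    ∑' x : S, Q (Function.const ι x) = 1 - ∑' v : {v : ι → X | ∃ i, v i ∉ S}, Q v := by
  set A : Set (ι → X) := {v | ∀ i, v i ∈ S}
  have hAc : {v : ι → X | ∃ i, v i ∉ S} = Aᶜ := by
    ext v
    simp [A, not_forall]
  obtain ⟨i₀⟩ := ‹Nonempty ι›
  have hconst : Function.Injective fun x : S ↦ (⟨Function.const ι x, fun _ ↦ x.2⟩ : A) :=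
    fun x y hxy ↦ Subtype.ext (congrFun (congrArg Subtype.val hxy) i₀)
  -- Coincidence forces every `v ∈ A` of positive mass to be constant.
  have hA : ∑' x : S, Q (Function.const ι x) = ∑' v : A, Q v := by
    refine hconst.tsum_eq (f := fun v : A ↦ Q v) fun ⟨v, hv⟩ hQv ↦ ?_
    have hvconst : ∀ i, v i = v i₀ := by
      by_contra! ⟨i, hi⟩
      exact hQv (eq_zero_of_coincident hQ0 hQs (hS _ (hv i₀) i) ⟨i₀, rfl⟩ hi)
    exact ⟨⟨v i₀, hv i₀⟩, Subtype.ext (funext fun i ↦ (hvconst i).symm)⟩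
  have hsplit : ∑' v : A, Q v + ∑' v : ↑Aᶜ, Q v = 1 :=
    hQ1 ▸ (hQs.subtype _).tsum_add_tsum_compl (hQs.subtype _)
  rw [hA, hAc, ← hsplit, add_sub_cancel_right]

end Coupling

lemma sum_tsum_mul_le_of_eqOn {ι X : Type*} [Fintype ι] {D : ι → X → ℝ} (hD0 : ∀ i x, 0 ≤ D i x)
    (hDs : ∀ i, Summable (D i)) (hD1 : ∀ i, ∑' x, D i x = 1) {S : Set X} {P : X → ℝ}
    (hDP : ∀ i, Set.EqOn (D i) P S) {γ : ℝ} (hP : ∑' x : S, P x = 1 - γ)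
    {g : X → ι → ℝ} (hg0 : ∀ x i, 0 ≤ g x i) (hg1 : ∀ x, ∑ i, g x i = 1) :
    ∑ i, ∑' x, D i x * g x i ≤ (1 - γ) + Fintype.card ι * γ := by
  have hg_le_one (x : X) (i : ι) : g x i ≤ 1 :=
    hg1 x ▸ single_le_sum (fun j _ ↦ hg0 x j) (mem_univ i)
  have hDg_le (i : ι) (x : X) : D i x * g x i ≤ D i x :=
    mul_le_of_le_one_right (hD0 i x) (hg_le_one x i)
  have hDgs (i : ι) : Summable fun x ↦ D i x * g x i :=
    (hDs i).of_nonneg_of_le (fun x ↦ mul_nonneg (hD0 i x) (hg0 x i)) (hDg_le i)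
  have hon : ∑ i, ∑' x : S, D i x * g x i = 1 - γ := by
    calc ∑ i, ∑' x : S, D i x * g x i = ∑' x : S, ∑ i, D i x * g x i :=
          (Summable.tsum_finsetSum fun i _ ↦ (hDgs i).subtype _).symm
      _ = ∑' x : S, P x := tsum_congr fun x ↦ by
          rw [sum_congr rfl fun i _ ↦ by rw [hDP i x.2], ← mul_sum, hg1, mul_one]
      _ = 1 - γ := hP
  have hoff (i : ι) : ∑' x : ↥Sᶜ, D i x * g x i ≤ γ := by
    have hDS : ∑' x : S, D i x = 1 - γ := hP ▸ tsum_congr fun x ↦ hDP i x.2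
    have hsplit : ∑' x : S, D i x + ∑' x : ↥Sᶜ, D i x = ∑' x, D i x :=
      ((hDs i).subtype _).tsum_add_tsum_compl ((hDs i).subtype _)
    have hle : ∑' x : ↥Sᶜ, D i x * g x i ≤ ∑' x : ↥Sᶜ, D i x :=
      ((hDgs i).subtype _).tsum_le_tsum (fun x ↦ hDg_le i x) ((hDs i).subtype _)
    linarith [hD1 i]
  calc ∑ i, ∑' x, D i x * g x i
      = ∑ i, ∑' x : S, D i x * g x i + ∑ i, ∑' x : ↥Sᶜ, D i x * g x i := by
        rw [← sum_add_distrib]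
        exact sum_congr rfl fun i _ ↦
          (((hDgs i).subtype _).tsum_add_tsum_compl ((hDgs i).subtype _)).symm
    _ ≤ (1 - γ) + ∑ _i : ι, γ := by
        rw [hon]
        gcongr with i
        exact hoff i
    _ = (1 - γ) + Fintype.card ι * γ := by simp

theorem multi_coupling_indistinguishability {X : Type*}
    (n : ℕ) (hn : 1 ≤ n)
    (D : Fin n → X → ℝ)
    (hD0 : ∀ i x, 0 ≤ D i x) (hDs : ∀ i, Summable (D i)) (hD1 : ∀ i, ∑' x, D i x = 1)
    (Q : (Fin n → X) → ℝ)
    (hQ0 : ∀ v, 0 ≤ Q v) (hQs : Summable Q) (hQ1 : ∑' v, Q v = 1)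
    (hcoupling : ∀ (i : Fin n) (x : X),
      (∑' v : {v : Fin n → X | v i = x}, Q v) = D i x)
    (S : Set X)
    (hcoincident : ∀ x ∈ S, ∀ i : Fin n,
      (∑' v : {v : Fin n → X | v i = x}, Q v)
        = ∑' v : {v : Fin n → X | ∃ j : Fin n, v j = x}, Q v)
    (γ : ℝ) (hγ : γ = ∑' v : {v : Fin n → X | ∃ i : Fin n, v i ∉ S}, Q v)
    (g : X → Fin n → ℝ)
    (hg0 : ∀ x i, 0 ≤ g x i) (hg1 : ∀ x, ∑ i, g x i = 1) :
    (1 / (n : ℝ)) * ∑ i, ∑' x, D i x * g x i ≤ γ + (1 - γ) / (n : ℝ) := by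
  have : Nonempty (Fin n) := ⟨⟨0, hn⟩⟩
  have hDS (i : Fin n) : Set.EqOn (D i) (fun x ↦ Q (Function.const _ x)) S := fun x hx ↦
    (hcoupling i x).symm.trans (tsum_fiber_eq_const hQ0 hQs (hcoincident x hx) i)
  have hmass : ∑' x : S, Q (Function.const _ x) = 1 - γ :=
    hγ ▸ tsum_const_eq_one_sub hQ0 hQs hQ1 hcoincident
  have hsum := sum_tsum_mul_le_of_eqOn hD0 hDs hD1 hDS hmass hg0 hg1
  rw [Fintype.card_fin] at hsum
  have hnpos : (0 : ℝ) < n := by exact_mod_cast hn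
  calc (1 / (n : ℝ)) * ∑ i, ∑' x, D i x * g x i ≤ (1 / (n : ℝ)) * ((1 - γ) + n * γ) := by
        gcongr
    _ = γ + (1 - γ) / (n : ℝ) := by field_simp; ring
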